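/- An inner non-degenerate metric ĝ on a transitive Lie algebroid decomposes as ĝ(X,Y) = g(ρ(X), ρ(Y)) + h(ω^∇(X), ω^∇(Y)), where ∇ is the unique connection orthogonal to ι(L), g(X,Y) = ĝ(∇_X, ∇_Y), h = ι*ĝ, and ω^∇ is the connection 1-form of ∇. -/
import Mathlib


/-- Decomposition of an inner non-degenerate metric on a transitive Lie algebroid:
with the connection `D` orthogonal to `ι(L)` and its connection 1-form `ω`
(`a = D(ρ a) − ι(ω a)`), one has
`ghat(a, b) = g(ρ a, ρ b) + h(ω a, ω b)` where `g(X,Y) = ghat(D X, D Y)` and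
`h(γ,η) = ghat(ι γ, ι η)`. -/
theorem stmt14 {C VF L A : Type*} [CommRing C]
    [AddCommGroup VF] [Module C VF] [AddCommGroup L] [Module C L]
    [AddCommGroup A] [Module C A]
    (ρ : A →ₗ[C] VF) (ι : L →ₗ[C] A) (D : VF →ₗ[C] A) (ω : A →ₗ[C] L)
    (ghat : A →ₗ[C] A →ₗ[C] C)
    (hsymm : ∀ a b : A, ghat a b = ghat b a)
    (hD : ∀ X : VF, ρ (D X) = X)
    (hdecomp : ∀ a : A, a = D (ρ a) - ι (ω a))
    (ho : ∀ (X : VF) (γ : L), ghat (D X) (ι γ) = 0) :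
    ∀ a b : A, ghat a b = ghat (D (ρ a)) (D (ρ b)) + ghat (ι (ω a)) (ι (ω b)) := by
  intro a b
  conv_lhs => rw [hdecomp a, hdecomp b]
  simp only [map_sub, LinearMap.sub_apply]
  rw [ho, hsymm (ι (ω a)) (D (ρ b)), ho]
  ring
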